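/- arXiv:1607.07521 — 3 statements merged into one kernel-verified Lean document; each statement's English description precedes it below -/
import Mathlib

section
/- If the weights α_{ij} satisfy the covariate calibration constraints Σ_{i,j} ω_{ij} A_{ij} α_{ij} X_{ij} = Σ_{i,j} ω_{ij} X_{ij} and Σ_{i,j} ω_{ij} (1−A_{ij}) α_{ij} X_{ij} = Σ_{i,j} ω_{ij} X_{ij}, and per-cluster constraints Σ_j ω_{ij} A_{ij} α_{ij} = Σ_j ω_{ij} and Σ_j ω_{ij}(1−A_{ij}) α_{ij} = Σ_j ω_{ij} for each i, then the augmented inverse probability weighting estimator with outcome model X_{ij}β_a + U_i coincides with the plain inverse probability weighting estimator: τ̂_AIPTW = τ̂_IPTW, for any β_0, β_1 and any cluster effects U_i. -/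
/-!
With `A ∈ {0, 1}`, the augmentation residuals are affine in the calibrated weights:
`ω (A - ê) / ê = ω A α - ω` and `ω (A - ê) / (1 - ê) = ω - ω (1 - A) α`. Hence each
augmentation term is a sum of `(c - ω) · (L X + U)` for calibrated weights `c`, with `L` linear.
The covariate constraints kill the `L X` part after applying `L`, and the per-cluster constraints
kill the `U` part, since `U` is constant within a cluster.
-/

open Finset

section Calibration

variable {ι : Type*} [Fintype ι] {κ : ι → Type*} [∀ i, Fintype (κ i)]
  {E : Type*} [AddCommGroup E] [Module ℝ E] (c w : (i : ι) → κ i → ℝ)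

theorem sum_sum_sub_mul_linearMap_eq_zero (X : (i : ι) → κ i → E) (L : E →ₗ[ℝ] ℝ)
    (h : ∑ i, ∑ j, c i j • X i j = ∑ i, ∑ j, w i j • X i j) :
    ∑ i, ∑ j, (c i j - w i j) * L (X i j) = 0 := by
  have hL := congrArg L h
  simp only [map_sum, map_smul, smul_eq_mul] at hL
  simp only [sub_mul, sum_sub_distrib, hL, sub_self]

theorem sum_sum_sub_mul_cluster_eq_zero (U : ι → ℝ) (h : ∀ i, ∑ j, c i j = ∑ j, w i j) :
    ∑ i, ∑ j, (c i j - w i j) * U i = 0 := by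
  simp only [← sum_mul, sum_sub_distrib, h, sub_self, zero_mul, sum_const_zero]

theorem sum_sum_sub_mul_linearMap_add_cluster_eq_zero (X : (i : ι) → κ i → E) (L : E →ₗ[ℝ] ℝ)
    (U : ι → ℝ) (hX : ∑ i, ∑ j, c i j • X i j = ∑ i, ∑ j, w i j • X i j)
    (hU : ∀ i, ∑ j, c i j = ∑ j, w i j) :
    ∑ i, ∑ j, (c i j - w i j) * (L (X i j) + U i) = 0 := by
  simp only [mul_add, sum_add_distrib, sum_sum_sub_mul_linearMap_eq_zero c w X L hX,
    sum_sum_sub_mul_cluster_eq_zero c w U hU, add_zero]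

end Calibration

section Propensity

variable {a e : ℝ}

theorem sub_div_self_eq_mul_ipw_sub_one (ha : a = 0 ∨ a = 1) (he : e ≠ 0) :
    (a - e) / e = a * (a / e + (1 - a) / (1 - e)) - 1 := by
  rcases ha with rfl | rfl <;> field_simp <;> ring

theorem sub_div_one_sub_eq_one_sub_mul_ipw (ha : a = 0 ∨ a = 1) (he : 1 - e ≠ 0) :
    (a - e) / (1 - e) = 1 - (1 - a) * (a / e + (1 - a) / (1 - e)) := by
  rcases ha with rfl | rfl <;> field_simp <;> ring

end Propensity

theorem stmt3_general (K : ℕ) (n : Fin K → ℕ) (p : ℕ)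
    (w : (i : Fin K) → Fin (n i) → ℝ)
    (A : (i : Fin K) → Fin (n i) → ℝ)
    (X : (i : Fin K) → Fin (n i) → Fin p → ℝ)
    (Y : (i : Fin K) → Fin (n i) → ℝ)
    (ehat : (i : Fin K) → Fin (n i) → ℝ)
    (β₀ β₁ : Fin p → ℝ) (U : Fin K → ℝ)
    (hA : ∀ i j, A i j = 0 ∨ A i j = 1)
    (he : ∀ i j, 0 < ehat i j ∧ ehat i j < 1)
    (α : (i : Fin K) → Fin (n i) → ℝ)
    (hα : ∀ i j, α i j = A i j / ehat i j + (1 - A i j) / (1 - ehat i j))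
    -- covariate calibration constraints
    (hc1 : ∑ i, ∑ j, (w i j * A i j * α i j) • X i j = ∑ i, ∑ j, (w i j) • X i j)
    (hc2 : ∑ i, ∑ j, (w i j * (1 - A i j) * α i j) • X i j = ∑ i, ∑ j, (w i j) • X i j)
    -- per-cluster calibration constraints
    (hc3 : ∀ i, ∑ j, w i j * A i j * α i j = ∑ j, w i j)
    (hc4 : ∀ i, ∑ j, w i j * (1 - A i j) * α i j = ∑ j, w i j) :
    -- τ̂_AIPTW = τ̂_IPTW
    (∑ i, ∑ j, w i j)⁻¹ *
        (∑ i, ∑ j, w i j * (A i j * Y i j / ehat i j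
            - (1 - A i j) * Y i j / (1 - ehat i j)))
      - (∑ i, ∑ j, w i j)⁻¹ *
        (∑ i, ∑ j, w i j * ((A i j - ehat i j) / ehat i j)
            * ((∑ k, X i j k * β₁ k) + U i))
      - (∑ i, ∑ j, w i j)⁻¹ *
        (∑ i, ∑ j, w i j * ((A i j - ehat i j) / (1 - ehat i j))
            * ((∑ k, X i j k * β₀ k) + U i))
    = (∑ i, ∑ j, w i j)⁻¹ *
        (∑ i, ∑ j, w i j * (A i j * Y i j / ehat i j
            - (1 - A i j) * Y i j / (1 - ehat i j))) := by
  have hlin (β : Fin p → ℝ) (i j) :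
      ∑ k, X i j k * β k = Fintype.linearCombination ℝ β (X i j) := by
    simp only [Fintype.linearCombination_apply, smul_eq_mul]
  have hres₁ (i j) : w i j * ((A i j - ehat i j) / ehat i j) = w i j * A i j * α i j - w i j := by
    rw [sub_div_self_eq_mul_ipw_sub_one (hA i j) (he i j).1.ne', hα]
    ring
  have hres₀ (i j) : w i j * ((A i j - ehat i j) / (1 - ehat i j))
      = -(w i j * (1 - A i j) * α i j - w i j) := by
    rw [sub_div_one_sub_eq_one_sub_mul_ipw (hA i j) (sub_ne_zero.2 (he i j).2.ne'), hα]
    ring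
  have htreated : ∑ i, ∑ j, w i j * ((A i j - ehat i j) / ehat i j)
      * ((∑ k, X i j k * β₁ k) + U i) = 0 := by
    simp only [hres₁, hlin β₁]
    exact sum_sum_sub_mul_linearMap_add_cluster_eq_zero _ w X _ U hc1 hc3
  have hcontrol : ∑ i, ∑ j, w i j * ((A i j - ehat i j) / (1 - ehat i j))
      * ((∑ k, X i j k * β₀ k) + U i) = 0 := by
    simp only [hres₀, hlin β₀, neg_mul, sum_neg_distrib, neg_eq_zero]
    exact sum_sum_sub_mul_linearMap_add_cluster_eq_zero _ w X _ U hc2 hc4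
  rw [htreated, hcontrol, mul_zero, sub_zero, sub_zero]

/-- under the covariate and per-cluster calibration constraints,
the AIPTW estimator with linear-mixed outcome model coincides with the IPTW estimator. -/
theorem stmt3 (K : ℕ) (n : Fin K → ℕ) (p : ℕ)
    (w : (i : Fin K) → Fin (n i) → ℝ)
    (A : (i : Fin K) → Fin (n i) → ℝ)
    (X : (i : Fin K) → Fin (n i) → Fin p → ℝ)
    (Y : (i : Fin K) → Fin (n i) → ℝ)
    (ehat : (i : Fin K) → Fin (n i) → ℝ)
    (β₀ β₁ : Fin p → ℝ) (U : Fin K → ℝ)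
    (hw : ∀ i j, 0 < w i j)
    (hA : ∀ i j, A i j = 0 ∨ A i j = 1)
    (he : ∀ i j, 0 < ehat i j ∧ ehat i j < 1)
    (α : (i : Fin K) → Fin (n i) → ℝ)
    (hα : ∀ i j, α i j = A i j / ehat i j + (1 - A i j) / (1 - ehat i j))
    -- covariate calibration constraints
    (hc1 : ∑ i, ∑ j, (w i j * A i j * α i j) • X i j = ∑ i, ∑ j, (w i j) • X i j)
    (hc2 : ∑ i, ∑ j, (w i j * (1 - A i j) * α i j) • X i j = ∑ i, ∑ j, (w i j) • X i j)
    -- per-cluster calibration constraints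
    (hc3 : ∀ i, ∑ j, w i j * A i j * α i j = ∑ j, w i j)
    (hc4 : ∀ i, ∑ j, w i j * (1 - A i j) * α i j = ∑ j, w i j) :
    -- τ̂_AIPTW = τ̂_IPTW
    (∑ i, ∑ j, w i j)⁻¹ *
        (∑ i, ∑ j, w i j * (A i j * Y i j / ehat i j
            - (1 - A i j) * Y i j / (1 - ehat i j)))
      - (∑ i, ∑ j, w i j)⁻¹ *
        (∑ i, ∑ j, w i j * ((A i j - ehat i j) / ehat i j)
            * ((∑ k, X i j k * β₁ k) + U i))
      - (∑ i, ∑ j, w i j)⁻¹ *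
        (∑ i, ∑ j, w i j * ((A i j - ehat i j) / (1 - ehat i j))
            * ((∑ k, X i j k * β₀ k) + U i))
    = (∑ i, ∑ j, w i j)⁻¹ *
        (∑ i, ∑ j, w i j * (A i j * Y i j / ehat i j
            - (1 - A i j) * Y i j / (1 - ehat i j))) :=
  stmt3_general K n p w A X Y ehat β₀ β₁ U hA he α hα hc1 hc2 hc3 hc4
end

section
/- Let q₁(X,U) = E[A/ê(X,U) − 1 | X, U] where ê is any measurable function of (X,U) bounded in (ε, 1−ε). Suppose X and U are independent, and Y(1) satisfies Y(1) ⟂ A | (X,U). Define μ₁(U) = E[q₁(X,U)·m(X,U)] / E[q₁(X,U)] conditional on U (integrating over the marginal law of X), where m(X,U) = E[Y(1)|X,U], assuming E[q₁(X,U)|U] ≠ 0 a.s. Then E[ (A/ê(X,U) − 1)(Y(1) − μ₁(U)) ] = 0. -/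
/-!
Conditioning on `V = (X, U)` turns the weight `A / ê(V) - 1` into `q₁(V)`: `1 / ê(V)` is
`V`-measurable and conditional independence gives `E[Y(1) A | V] = E[Y(1) | V] E[A | V]`, so
`E[(A / ê(V) - 1)(Y(1) - μ₁(U))] = E[q₁(V) (m(V) - μ₁(U))]`. Since `X ⟂ U`, the law of `V` is the
product of the marginals, and by Fubini the right-hand side is the `U`-average of
`∫ q₁(x, u) m(x, u) dF_X - μ₁(u) ∫ q₁(x, u) dF_X`, which vanishes by the definition of `μ₁`.
The conditional product rule comes from `condExpKernel`: under almost every measure of this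
regular conditional distribution, `Y(1)` and `A` are independent.
-/

open MeasureTheory ProbabilityTheory

namespace ProbabilityTheory

variable {Ω : Type*} {m mΩ : MeasurableSpace Ω} [StandardBorelSpace Ω]
  {μ : Measure Ω} [IsFiniteMeasure μ] {hm : m ≤ mΩ}

theorem CondIndepFun.ae_indepFun_condExpKernel {β γ : Type*} {mβ : MeasurableSpace β}
    {mγ : MeasurableSpace γ} [MeasurableSpace.CountablyGenerated β]
    [MeasurableSpace.CountablyGenerated γ] {f : Ω → β} {g : Ω → γ}
    (hf : Measurable f) (hg : Measurable g) (hfg : CondIndepFun m hm f g μ) :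
    ∀ᵐ ω ∂μ, IndepFun f g (condExpKernel μ m ω) := by
  have h := (Kernel.indepFun_iff_compProd_map_prod_eq_compProd_prod_map_map hf hg).1 hfg
  filter_upwards [ae_of_ae_trim hm (Kernel.ae_eq_of_compProd_eq h)] with ω hω
  rw [indepFun_iff_map_prod_eq_prod_map_map hf.aemeasurable hg.aemeasurable]
  simpa [Kernel.map_apply _ (hf.prodMk hg), Kernel.prod_apply, Kernel.map_apply _ hf,
    Kernel.map_apply _ hg] using hω

theorem CondIndepFun.condExp_mul {f g : Ω → ℝ} (hf : Measurable f)
    (hg : Measurable g) (hfg : CondIndepFun m hm f g μ) (hfi : Integrable f μ)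
    (hgi : Integrable g μ) (hfgi : Integrable (f * g) μ) :
    μ[f * g | m] =ᵐ[μ] μ[f | m] * μ[g | m] := by
  filter_upwards [hfg.ae_indepFun_condExpKernel hf hg,
    condExp_ae_eq_integral_condExpKernel hm hfgi, condExp_ae_eq_integral_condExpKernel hm hfi,
    condExp_ae_eq_integral_condExpKernel hm hgi] with ω hω hfg' hf' hg'
  rw [hfg', Pi.mul_apply, hf', hg']
  exact hω.integral_mul_eq_mul_integral hf.aestronglyMeasurable hg.aestronglyMeasurable

end ProbabilityTheory

theorem abs_div_sub_one_mem_Icc {a e ε : ℝ} (ha : a = 0 ∨ a = 1) (hε : 0 < ε) (he : ε ≤ e)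
    (he' : e ≤ 1 - ε) : |a / e - 1| ∈ Set.Icc ε ε⁻¹ := by
  have he0 : 0 < e := hε.trans_le he
  have hε1 : ε ≤ 1 := by linarith
  rcases ha with rfl | rfl
  · simpa using ⟨hε1, one_le_inv₀ hε |>.2 hε1⟩
  · have h1 : 1 ≤ 1 / e := by rw [le_div_iff₀ he0]; linarith
    rw [abs_of_nonneg (by linarith), Set.mem_Icc, le_sub_iff_add_le, sub_le_iff_le_add]
    constructor
    · rw [le_div_iff₀ he0]; nlinarith
    · have := one_div_le_one_div_of_le hε he
      rw [one_div ε] at this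
      linarith

theorem MeasureTheory.Integrable.of_mul_of_le_abs {α : Type*} {mα : MeasurableSpace α}
    {μ : Measure α} {w h : α → ℝ} {c : ℝ} (hc : 0 < c) (hw : ∀ᵐ x ∂μ, c ≤ |w x|)
    (hh : AEStronglyMeasurable h μ) (hwh : Integrable (fun x => w x * h x) μ) :
    Integrable h μ := by
  refine (hwh.norm.const_mul c⁻¹).mono' hh ?_
  filter_upwards [hw] with x hx
  rw [norm_mul, Real.norm_eq_abs, Real.norm_eq_abs, le_inv_mul_iff₀ hc]
  exact mul_le_mul_of_nonneg_right hx (abs_nonneg _)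

section CondExp

variable {Ω : Type*} {m mΩ : MeasurableSpace Ω} {μ : Measure Ω}

theorem condExp_div_sub_one_mul_ae_eq (hm : m ≤ mΩ) {A Z e p z : Ω → ℝ} {c : ℝ} (hc : 0 < c)
    (he : StronglyMeasurable[m] e) (he_bdd : ∀ ω, c ≤ |e ω|) (hZ : Integrable Z μ)
    (hZA : Integrable (Z * A) μ) (hZA_condExp : μ[Z * A | m] =ᵐ[μ] μ[Z | m] * μ[A | m])
    (hp : p =ᵐ[μ] μ[A | m]) (hz : z =ᵐ[μ] μ[Z | m]) :
    μ[fun ω => (A ω / e ω - 1) * Z ω | m] =ᵐ[μ] fun ω => (p ω / e ω - 1) * z ω := by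
  have he_inv : StronglyMeasurable[m] e⁻¹ := he.measurable.inv.stronglyMeasurable
  have he_inv_bdd : ∀ ω, ‖e⁻¹ ω‖ ≤ c⁻¹ := fun ω => by
    rw [Pi.inv_apply, norm_inv, Real.norm_eq_abs]
    exact inv_anti₀ hc (he_bdd ω)
  have hinvZA : Integrable (e⁻¹ * (Z * A)) μ :=
    hZA.bdd_mul (he_inv.mono hm).aestronglyMeasurable (ae_of_all _ he_inv_bdd)
  have hsplit : (fun ω => (A ω / e ω - 1) * Z ω) = e⁻¹ * (Z * A) - Z := by
    ext ω; simp only [Pi.sub_apply, Pi.mul_apply, Pi.inv_apply]; ring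
  rw [hsplit]
  filter_upwards [condExp_sub hinvZA hZ m,
    condExp_mul_of_stronglyMeasurable_left he_inv hinvZA hZA, hZA_condExp, hp, hz]
    with ω h_sub h_pull h_prod hpω hzω
  rw [h_sub, Pi.sub_apply, h_pull, Pi.mul_apply, h_prod, Pi.mul_apply, Pi.inv_apply, hpω, hzω]
  ring

theorem condExp_div_sub_one_mul_ae_eq_of_stronglyMeasurable [IsFiniteMeasure μ]
    (hm : m ≤ mΩ) {A Z e p : Ω → ℝ} {c C : ℝ} (hc : 0 < c) (he : StronglyMeasurable[m] e)
    (he_bdd : ∀ ω, c ≤ |e ω|) (hA : AEStronglyMeasurable A μ) (hA_bdd : ∀ᵐ ω ∂μ, ‖A ω‖ ≤ C)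
    (hZ : StronglyMeasurable[m] Z) (hZi : Integrable Z μ) (hp : p =ᵐ[μ] μ[A | m]) :
    μ[fun ω => (A ω / e ω - 1) * Z ω | m] =ᵐ[μ] fun ω => (p ω / e ω - 1) * Z ω := by
  have hZA : Integrable (Z * A) μ := hZi.mul_bdd hA hA_bdd
  have hZ_condExp : μ[Z | m] = Z := condExp_of_stronglyMeasurable hm hZ hZi
  refine condExp_div_sub_one_mul_ae_eq hm hc he he_bdd hZi hZA ?_ hp (.of_eq hZ_condExp.symm)
  rw [hZ_condExp]
  exact condExp_mul_of_stronglyMeasurable_left hZ hZA (.of_bound hA C hA_bdd)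

theorem condExp_div_sub_one_mul_ae_eq_of_condIndepFun [StandardBorelSpace Ω]
    [IsFiniteMeasure μ] (hm : m ≤ mΩ) {A Z e p z : Ω → ℝ} {c C : ℝ} (hc : 0 < c)
    (he : StronglyMeasurable[m] e) (he_bdd : ∀ ω, c ≤ |e ω|) (hA : Measurable A)
    (hA_bdd : ∀ᵐ ω ∂μ, ‖A ω‖ ≤ C)
    (hZ : Measurable Z) (hZi : Integrable Z μ) (hZA : CondIndepFun m hm Z A μ)
    (hp : p =ᵐ[μ] μ[A | m]) (hz : z =ᵐ[μ] μ[Z | m]) :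
    μ[fun ω => (A ω / e ω - 1) * Z ω | m] =ᵐ[μ] fun ω => (p ω / e ω - 1) * z ω := by
  have hZA_int : Integrable (Z * A) μ := hZi.mul_bdd hA.aestronglyMeasurable hA_bdd
  exact condExp_div_sub_one_mul_ae_eq hm hc he he_bdd hZi hZA_int
    (hZA.condExp_mul hZ hA hZi (.of_bound hA.aestronglyMeasurable C hA_bdd) hZA_int) hp hz

end CondExp

theorem Measurable.integral_prod_left_div {α β : Type*} {mα : MeasurableSpace α}
    {mβ : MeasurableSpace β} {ν : Measure α} [SFinite ν] {f g : α × β → ℝ}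
    (hf : Measurable f) (hg : Measurable g) :
    Measurable fun u => (∫ x, f (x, u) ∂ν) / ∫ x, g (x, u) ∂ν :=
  (hf.stronglyMeasurable.integral_prod_left').measurable.div
    (hg.stronglyMeasurable.integral_prod_left').measurable

theorem integral_prod_mul_eq_integral_prod_mul_snd {α β : Type*} {mα : MeasurableSpace α}
    {mβ : MeasurableSpace β} {ν : Measure α} {ρ : Measure β} [SFinite ν] [SFinite ρ]
    {q m : α × β → ℝ} {r : β → ℝ} (hqm : Integrable (fun p => q p * m p) (ν.prod ρ))
    (hqr : Integrable (fun p => q p * r p.2) (ν.prod ρ))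
    (hr : ∀ᵐ u ∂ρ, (∫ x, q (x, u) ∂ν) * r u = ∫ x, q (x, u) * m (x, u) ∂ν) :
    ∫ p, q p * m p ∂(ν.prod ρ) = ∫ p, q p * r p.2 ∂(ν.prod ρ) := by
  rw [integral_prod_symm _ hqm, integral_prod_symm _ hqr]
  refine integral_congr_ae ?_
  filter_upwards [hr] with u hu
  rw [integral_mul_const, hu]

theorem ProbabilityTheory.IndepFun.integral_mul_eq_integral_mul_comp_right {Ω α β : Type*}
    {mΩ : MeasurableSpace Ω} {mα : MeasurableSpace α} {mβ : MeasurableSpace β}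
    {μ : Measure Ω} [IsFiniteMeasure μ] {X : Ω → α} {U : Ω → β} (hX : Measurable X)
    (hU : Measurable U) (hXU : IndepFun X U μ) {q m : α × β → ℝ} {r : β → ℝ}
    (hq : Measurable q) (hm : Measurable m) (hr_meas : Measurable r)
    (hqm : Integrable (fun ω => q (X ω, U ω) * m (X ω, U ω)) μ)
    (hqr : Integrable (fun ω => q (X ω, U ω) * r (U ω)) μ)
    (hr : ∀ᵐ u ∂(μ.map U), (∫ x, q (x, u) ∂(μ.map X)) * r u =
      ∫ x, q (x, u) * m (x, u) ∂(μ.map X)) :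
    ∫ ω, q (X ω, U ω) * m (X ω, U ω) ∂μ = ∫ ω, q (X ω, U ω) * r (U ω) ∂μ := by
  have hV : Measurable fun ω => (X ω, U ω) := hX.prodMk hU
  have hqm' : Measurable fun p => q p * m p := hq.mul hm
  have hqr' : Measurable fun p : α × β => q p * r p.2 := hq.mul (hr_meas.comp measurable_snd)
  have hlaw := (indepFun_iff_map_prod_eq_prod_map_map hX.aemeasurable hU.aemeasurable).1 hXU
  rw [← integral_map hV.aemeasurable hqm'.aestronglyMeasurable,
    ← integral_map (f := fun p : α × β => q p * r p.2) hV.aemeasurable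
      hqr'.aestronglyMeasurable, hlaw]
  refine integral_prod_mul_eq_integral_prod_mul_snd ?_ ?_ hr
  · rw [← hlaw]; exact (integrable_map_measure hqm'.aestronglyMeasurable hV.aemeasurable).2 hqm
  · rw [← hlaw]; exact (integrable_map_measure hqr'.aestronglyMeasurable hV.aemeasurable).2 hqr

theorem stmt8_general {Ω : Type*} [mΩ : MeasurableSpace Ω] [StandardBorelSpace Ω]
    {μ : Measure Ω} [IsProbabilityMeasure μ]
    (A X U Y1 : Ω → ℝ)
    (eh prob mreg : ℝ × ℝ → ℝ)
    (hAmeas : Measurable A) (hXmeas : Measurable X) (hUmeas : Measurable U)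
    (hY1meas : Measurable Y1) (hehmeas : Measurable eh)
    (hpmeas : Measurable prob) (hmmeas : Measurable mreg)
    (hA01 : ∀ ω, A ω = 0 ∨ A ω = 1)
    (hY1int : Integrable Y1 μ)
    (ε : ℝ) (hε : 0 < ε)
    (heb : ∀ x u, ε ≤ eh (x, u) ∧ eh (x, u) ≤ 1 - ε)
    (hm : MeasurableSpace.comap (fun ω => (X ω, U ω)) inferInstance ≤ mΩ)
    -- X and U are independent
    (hXU : IndepFun X U μ)
    -- Y(1) ⟂ A | (X,U)
    (hci : CondIndepFun (MeasurableSpace.comap (fun ω => (X ω, U ω)) inferInstance)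
      hm Y1 A μ)
    -- prob(x,u) is a version of E[A | X, U]
    (hp : (fun ω => prob (X ω, U ω)) =ᵐ[μ]
      μ[A | MeasurableSpace.comap (fun ω => (X ω, U ω)) inferInstance])
    -- mreg(x,u) is a version of E[Y(1) | X, U]
    (hmr : (fun ω => mreg (X ω, U ω)) =ᵐ[μ]
      μ[Y1 | MeasurableSpace.comap (fun ω => (X ω, U ω)) inferInstance])
    (q1 : ℝ × ℝ → ℝ)
    (hq1 : ∀ x u, q1 (x, u) = prob (x, u) / eh (x, u) - 1)
    (μ1 : ℝ → ℝ)
    (hμ1 : ∀ u, μ1 u =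
      (∫ x, q1 (x, u) * mreg (x, u) ∂(Measure.map X μ)) /
      (∫ x, q1 (x, u) ∂(Measure.map X μ)))
    -- the denominator is nonzero for almost all u
    (hden : ∀ᵐ u ∂(Measure.map U μ), (∫ x, q1 (x, u) ∂(Measure.map X μ)) ≠ 0) :
    ∫ ω, (A ω / eh (X ω, U ω) - 1) * (Y1 ω - μ1 (U ω)) ∂μ = 0 := by
  set w : Ω → ℝ := fun ω => A ω / eh (X ω, U ω) - 1
  -- the integral is `0` by convention when the integrand is not integrable
  by_cases hint : Integrable (fun ω => w ω * (Y1 ω - μ1 (U ω))) μ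
  swap
  · exact integral_undef hint
  have hV_meas : ∀ v : ℝ × ℝ → ℝ, Measurable v → StronglyMeasurable[MeasurableSpace.comap
      (fun ω => (X ω, U ω)) inferInstance] (fun ω => v (X ω, U ω)) :=
    fun v hv => (hv.comp (comap_measurable _)).stronglyMeasurable
  have heh_bdd : ∀ ω, ε ≤ |eh (X ω, U ω)| := fun ω => (heb _ _).1.trans (le_abs_self _)
  have hw_mem : ∀ ω, |w ω| ∈ Set.Icc ε ε⁻¹ := fun ω =>
    abs_div_sub_one_mem_Icc (hA01 ω) hε (heb _ _).1 (heb _ _).2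
  have hA_bdd : ∀ᵐ ω ∂μ, ‖A ω‖ ≤ 1 :=
    ae_of_all _ fun ω => by rcases hA01 ω with h | h <;> simp [h]
  have hq1_meas : Measurable q1 :=
    (funext fun p => hq1 p.1 p.2 : q1 = _) ▸ (hpmeas.div hehmeas).sub measurable_const
  have hμ1_meas : Measurable μ1 :=
    funext hμ1 ▸ Measurable.integral_prod_left_div (hq1_meas.mul hmmeas) hq1_meas
  -- `|w| ≥ ε` transfers integrability from `w (Y - μ₁(U))` to `μ₁(U)`
  have hμ1U_int : Integrable (fun ω => μ1 (U ω)) μ := by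
    have := hint.of_mul_of_le_abs hε (ae_of_all _ fun ω => (hw_mem ω).1)
      (hY1meas.sub (hμ1_meas.comp hUmeas)).aestronglyMeasurable
    exact (hY1int.sub this).congr (ae_of_all _ fun ω => sub_sub_cancel _ _)
  have hwY : μ[fun ω => w ω * Y1 ω | MeasurableSpace.comap (fun ω => (X ω, U ω)) inferInstance]
      =ᵐ[μ] fun ω => q1 (X ω, U ω) * mreg (X ω, U ω) := by
    simpa only [hq1] using condExp_div_sub_one_mul_ae_eq_of_condIndepFun hm hε
      (hV_meas eh hehmeas) heh_bdd hAmeas hA_bdd hY1meas hY1int hci hp hmr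
  have hwμ1 : μ[fun ω => w ω * μ1 (U ω) | MeasurableSpace.comap (fun ω => (X ω, U ω))
      inferInstance] =ᵐ[μ] fun ω => q1 (X ω, U ω) * μ1 (U ω) := by
    simpa only [hq1] using condExp_div_sub_one_mul_ae_eq_of_stronglyMeasurable hm hε
      (hV_meas eh hehmeas) heh_bdd hAmeas.aestronglyMeasurable hA_bdd
      (hV_meas (fun p => μ1 p.2) (hμ1_meas.comp measurable_snd)) hμ1U_int hp
  have hr : ∀ᵐ u ∂(Measure.map U μ), (∫ x, q1 (x, u) ∂(Measure.map X μ)) * μ1 u =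
      ∫ x, q1 (x, u) * mreg (x, u) ∂(Measure.map X μ) := by
    filter_upwards [hden] with u hu
    rw [hμ1 u, mul_div_cancel₀ _ hu]
  have hw_meas : AEStronglyMeasurable w μ :=
    ((hAmeas.div (hehmeas.comp (hXmeas.prodMk hUmeas))).sub measurable_const).aestronglyMeasurable
  have hw_bdd : ∀ᵐ ω ∂μ, ‖w ω‖ ≤ ε⁻¹ := ae_of_all _ fun ω => (hw_mem ω).2
  calc ∫ ω, w ω * (Y1 ω - μ1 (U ω)) ∂μ
      = ∫ ω, w ω * Y1 ω ∂μ - ∫ ω, w ω * μ1 (U ω) ∂μ := by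
        simp_rw [mul_sub]
        exact integral_sub (hY1int.bdd_mul hw_meas hw_bdd) (hμ1U_int.bdd_mul hw_meas hw_bdd)
    _ = ∫ ω, q1 (X ω, U ω) * mreg (X ω, U ω) ∂μ - ∫ ω, q1 (X ω, U ω) * μ1 (U ω) ∂μ := by
        rw [← integral_condExp hm, integral_congr_ae hwY,
          ← integral_condExp hm (f := fun ω => w ω * μ1 (U ω)), integral_congr_ae hwμ1]
    _ = 0 := by
        rw [hXU.integral_mul_eq_integral_mul_comp_right hXmeas hUmeas hq1_meas hmmeas hμ1_meas
          (integrable_condExp.congr hwY) (integrable_condExp.congr hwμ1) hr, sub_self]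

/-- with X ⟂ U and Y(1) ⟂ A | (X,U), the weighted residual of
Y(1) around the cluster-level function μ₁(U) has mean zero. -/
theorem stmt8 {Ω : Type*} [mΩ : MeasurableSpace Ω] [StandardBorelSpace Ω] [Nonempty Ω]
    {μ : Measure Ω} [IsProbabilityMeasure μ]
    (A X U Y1 : Ω → ℝ)
    (eh prob mreg : ℝ × ℝ → ℝ)
    (hAmeas : Measurable A) (hXmeas : Measurable X) (hUmeas : Measurable U)
    (hY1meas : Measurable Y1) (hehmeas : Measurable eh)
    (hpmeas : Measurable prob) (hmmeas : Measurable mreg)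
    (hA01 : ∀ ω, A ω = 0 ∨ A ω = 1)
    (hY1int : Integrable Y1 μ)
    (ε : ℝ) (hε : 0 < ε) (hε' : ε < 1/2)
    (heb : ∀ x u, ε ≤ eh (x, u) ∧ eh (x, u) ≤ 1 - ε)
    (hm : MeasurableSpace.comap (fun ω => (X ω, U ω)) inferInstance ≤ mΩ)
    -- X and U are independent
    (hXU : IndepFun X U μ)
    -- Y(1) ⟂ A | (X,U)
    (hci : CondIndepFun (MeasurableSpace.comap (fun ω => (X ω, U ω)) inferInstance)
      hm Y1 A μ)
    -- prob(x,u) is a version of E[A | X, U]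
    (hp : (fun ω => prob (X ω, U ω)) =ᵐ[μ]
      μ[A | MeasurableSpace.comap (fun ω => (X ω, U ω)) inferInstance])
    -- mreg(x,u) is a version of E[Y(1) | X, U]
    (hmr : (fun ω => mreg (X ω, U ω)) =ᵐ[μ]
      μ[Y1 | MeasurableSpace.comap (fun ω => (X ω, U ω)) inferInstance])
    (q1 : ℝ × ℝ → ℝ)
    (hq1 : ∀ x u, q1 (x, u) = prob (x, u) / eh (x, u) - 1)
    (μ1 : ℝ → ℝ)
    (hμ1 : ∀ u, μ1 u =
      (∫ x, q1 (x, u) * mreg (x, u) ∂(Measure.map X μ)) /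
      (∫ x, q1 (x, u) ∂(Measure.map X μ)))
    -- the denominator is nonzero for almost all u
    (hden : ∀ᵐ u ∂(Measure.map U μ), (∫ x, q1 (x, u) ∂(Measure.map X μ)) ≠ 0) :
    ∫ ω, (A ω / eh (X ω, U ω) - 1) * (Y1 ω - μ1 (U ω)) ∂μ = 0 :=
  stmt8_general (mΩ := mΩ) A X U Y1 eh prob mreg hAmeas hXmeas hUmeas hY1meas hehmeas hpmeas hmmeas
    hA01 hY1int ε hε heb hm hXU hci hp hmr q1 hq1 μ1 hμ1 hden
end

section
/- Suppose for all clusters i the constraints Σ_j ω_{ij} A_{ij}/ê_{ij} = Σ_j ω_{ij} and Σ_j ω_{ij}(1−A_{ij})/(1−ê_{ij}) = Σ_j ω_{ij} hold. Then the IPTW estimator admits the decomposition N̂(τ̂_cal − τ̄) = Σ_{i,j} ω_{ij}(A_{ij}/ê_{ij} − 1)(Y_{ij}(1) − μ₁(i)) − Σ_{i,j} ω_{ij}((1−A_{ij})/(1−ê_{ij}) − 1)(Y_{ij}(0) − μ₀(i)) for any cluster-level functions μ₀, μ₁: {1,…,K} → ℝ, where τ̄ = N̂^{-1} Σ_{i,j}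 ω_{ij}(Y_{ij}(1) − Y_{ij}(0)) and Y_{ij} = A_{ij}Y_{ij}(1) + (1−A_{ij})Y_{ij}(0). -/
/-!
Within one cluster, using `A ∈ {0, 1}` to resolve the observed outcome, the Horvitz–Thompson
contrast minus the weighted effect is `∑ ω (A/ê - 1) Y(1) - ∑ ω ((1-A)/(1-ê) - 1) Y(0)`.
The calibration constraints say exactly that the coefficients `ω (A/ê - 1)` and
`ω ((1-A)/(1-ê) - 1)` sum to zero over the cluster, so any cluster-level constant may be
subtracted from `Y(1)` and `Y(0)`. Summing over clusters and cancelling `N̂` (which vanishes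
only when every cluster is empty) gives the decomposition.
-/

open Finset

theorem Finset.sum_mul_sub_const_of_sum_eq_zero {ι : Type*} (s : Finset ι) (c x : ι → ℝ)
    (m : ℝ) (hc : ∑ i ∈ s, c i = 0) :
    ∑ i ∈ s, c i * (x i - m) = ∑ i ∈ s, c i * x i := by
  simp only [mul_sub, sum_sub_distrib, ← sum_mul, hc, zero_mul, sub_zero]

theorem Finset.sum_sum_eq_zero_of_pos_of_sum_sum_eq_zero {ι : Type*} [Fintype ι]
    {κ : ι → Type*} [∀ i, Fintype (κ i)] {w : (i : ι) → κ i → ℝ} (hw : ∀ i j, 0 < w i j)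
    (hN : ∑ i, ∑ j, w i j = 0) (f : (i : ι) → κ i → ℝ) :
    ∑ i, ∑ j, f i j = 0 := by
  have hzero : ∀ i j, w i j = 0 := fun i j =>
    (sum_eq_zero_iff_of_nonneg fun j _ => (hw i j).le).mp
      ((sum_eq_zero_iff_of_nonneg fun i _ => sum_nonneg fun j _ => (hw i j).le).mp hN i
        (mem_univ i)) j (mem_univ j)
  exact sum_eq_zero fun i _ => sum_eq_zero fun j _ => ((hw i j).ne' (hzero i j)).elim

section Cluster

variable {ι : Type*} [Fintype ι] (w A e Y0 Y1 Y : ι → ℝ)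

theorem sum_mul_div_sub_one_eq_zero (a : ι → ℝ) (h : ∑ j, w j * a j / e j = ∑ j, w j) :
    ∑ j, w j * (a j / e j - 1) = 0 := by
  simp only [mul_sub, mul_one, sum_sub_distrib, ← mul_div_assoc, h, sub_self]

theorem ipw_contrast_sub_effect_eq {a y y0 y1 ω e : ℝ} (ha : a = 0 ∨ a = 1)
    (hy : y = a * y1 + (1 - a) * y0) :
    ω * (a * y / e - (1 - a) * y / (1 - e)) - ω * (y1 - y0)
      = ω * (a / e - 1) * y1 - ω * ((1 - a) / (1 - e) - 1) * y0 := by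
  subst hy
  rcases ha with rfl | rfl <;> ring

theorem sum_ipw_contrast_sub_effect_eq (hA : ∀ j, A j = 0 ∨ A j = 1)
    (hc1 : ∑ j, w j * A j / e j = ∑ j, w j)
    (hc2 : ∑ j, w j * (1 - A j) / (1 - e j) = ∑ j, w j)
    (hY : ∀ j, Y j = A j * Y1 j + (1 - A j) * Y0 j) (μ₀ μ₁ : ℝ) :
    ∑ j, w j * (A j * Y j / e j - (1 - A j) * Y j / (1 - e j)) - ∑ j, w j * (Y1 j - Y0 j)
      = ∑ j, w j * (A j / e j - 1) * (Y1 j - μ₁)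
        - ∑ j, w j * ((1 - A j) / (1 - e j) - 1) * (Y0 j - μ₀) := by
  rw [sum_mul_sub_const_of_sum_eq_zero _ _ _ _ (sum_mul_div_sub_one_eq_zero w e A hc1),
    sum_mul_sub_const_of_sum_eq_zero _ _ _ _
      (sum_mul_div_sub_one_eq_zero w (fun j => 1 - e j) (fun j => 1 - A j) hc2),
    ← sum_sub_distrib, ← sum_sub_distrib]
  exact sum_congr rfl fun j _ => ipw_contrast_sub_effect_eq (hA j) (hY j)

end Cluster

theorem stmt14_general (K : ℕ) (n : Fin K → ℕ)
    (w : (i : Fin K) → Fin (n i) → ℝ)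
    (A : (i : Fin K) → Fin (n i) → ℝ)
    (ehat : (i : Fin K) → Fin (n i) → ℝ)
    (Y0 Y1 : (i : Fin K) → Fin (n i) → ℝ)
    (hw : ∀ i j, 0 < w i j)
    (hA : ∀ i j, A i j = 0 ∨ A i j = 1)
    (hc1 : ∀ i, ∑ j, w i j * A i j / ehat i j = ∑ j, w i j)
    (hc2 : ∀ i, ∑ j, w i j * (1 - A i j) / (1 - ehat i j) = ∑ j, w i j)
    (Y : (i : Fin K) → Fin (n i) → ℝ)
    (hY : ∀ i j, Y i j = A i j * Y1 i j + (1 - A i j) * Y0 i j)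
    (Nhat : ℝ) (hN : Nhat = ∑ i, ∑ j, w i j)
    (τcal : ℝ)
    (hτcal : τcal = Nhat⁻¹ * ∑ i, ∑ j, w i j *
      (A i j * Y i j / ehat i j - (1 - A i j) * Y i j / (1 - ehat i j)))
    (τbar : ℝ)
    (hτbar : τbar = Nhat⁻¹ * ∑ i, ∑ j, w i j * (Y1 i j - Y0 i j))
    (μ₀ μ₁ : Fin K → ℝ) :
    Nhat * (τcal - τbar)
      = (∑ i, ∑ j, w i j * (A i j / ehat i j - 1) * (Y1 i j - μ₁ i))
        - (∑ i, ∑ j, w i j * ((1 - A i j) / (1 - ehat i j) - 1) * (Y0 i j - μ₀ i)) := by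
  subst hτcal hτbar
  rcases eq_or_ne Nhat 0 with hN0 | hN0
  · have hempty := sum_sum_eq_zero_of_pos_of_sum_sum_eq_zero hw (hN ▸ hN0)
    rw [hN0, zero_mul, hempty, hempty, sub_zero]
  · rw [mul_sub, mul_inv_cancel_left₀ hN0, mul_inv_cancel_left₀ hN0, ← sum_sub_distrib,
      ← sum_sub_distrib]
    exact sum_congr rfl fun i _ =>
      sum_ipw_contrast_sub_effect_eq _ _ _ _ _ _ (hA i) (hc1 i) (hc2 i) (hY i) (μ₀ i) (μ₁ i)

/-- under per-cluster calibration constraints, the IPTW estimator admits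
the residual decomposition around arbitrary cluster-level functions μ₀, μ₁. -/
theorem stmt14 (K : ℕ) (n : Fin K → ℕ)
    (w : (i : Fin K) → Fin (n i) → ℝ)
    (A : (i : Fin K) → Fin (n i) → ℝ)
    (ehat : (i : Fin K) → Fin (n i) → ℝ)
    (Y0 Y1 : (i : Fin K) → Fin (n i) → ℝ)
    (hw : ∀ i j, 0 < w i j)
    (hA : ∀ i j, A i j = 0 ∨ A i j = 1)
    (he : ∀ i j, 0 < ehat i j ∧ ehat i j < 1)
    (hc1 : ∀ i, ∑ j, w i j * A i j / ehat i j = ∑ j, w i j)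
    (hc2 : ∀ i, ∑ j, w i j * (1 - A i j) / (1 - ehat i j) = ∑ j, w i j)
    (Y : (i : Fin K) → Fin (n i) → ℝ)
    (hY : ∀ i j, Y i j = A i j * Y1 i j + (1 - A i j) * Y0 i j)
    (Nhat : ℝ) (hN : Nhat = ∑ i, ∑ j, w i j)
    (τcal : ℝ)
    (hτcal : τcal = Nhat⁻¹ * ∑ i, ∑ j, w i j *
      (A i j * Y i j / ehat i j - (1 - A i j) * Y i j / (1 - ehat i j)))
    (τbar : ℝ)
    (hτbar : τbar = Nhat⁻¹ * ∑ i, ∑ j, w i j * (Y1 i j - Y0 i j))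
    (μ₀ μ₁ : Fin K → ℝ) :
    Nhat * (τcal - τbar)
      = (∑ i, ∑ j, w i j * (A i j / ehat i j - 1) * (Y1 i j - μ₁ i))
        - (∑ i, ∑ j, w i j * ((1 - A i j) / (1 - ehat i j) - 1) * (Y0 i j - μ₀ i)) :=
  stmt14_general K n w A ehat Y0 Y1 hw hA hc1 hc2 Y hY Nhat hN τcal hτcal τbar hτbar μ₀ μ₁
end
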